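/- Let A be an m×n real matrix with full column rank n and rows a_1^T,...,a_m^T of unit Euclidean norm, let b ∈ ℝ^m, let x ∈ ℝ^n be any fixed vector, and set e = Ax − b. Let x_k ∈ ℝ^n be any point and let x_{k+1} be the Motzkin iterate obtained from x_k. Then at least one of the following holds: (i) ‖x_{k+1} − x‖² ≤ ‖x_k − x‖² − (1/2)‖Ax_k − b‖_∞², or both (ii) ‖x_k − x‖² ≤ 25 m σ_min(A)^{−2} ‖e‖_∞² and (iii) ‖x_{k+1} − x‖² ≤ (25 m σ_min(A)^{−2} + 8)‖e‖_∞². -/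

import Mathlib

/-!
With `r = A xk - b` and `i` the Motzkin index, a unit row gives the exact identity
`‖xk1 - x‖² = ‖xk - x‖² - r_i² + 2 r_i e_i`, and `‖r‖_∞ = |r_i|`. If `|r_i| ≥ 4 ‖e‖_∞` the
cross term is at most `r_i² / 2`, which is (i). Otherwise `A (xk - x) = r - e` has max norm
below `5 ‖e‖_∞`, so its Euclidean norm squared is below `25 m ‖e‖_∞²` and the singular value
bound gives (ii); (iii) follows since `-r_i² + 2 r_i e_i ≤ e_i²`.
-/

open Finset Matrix

section

variable {ι κ : Type*} [Fintype κ]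

lemma pi_norm_eq_abs_of_forall_sq_le [Fintype ι] (v : ι → ℝ) (i : ι)
    (h : ∀ j, v j ^ 2 ≤ v i ^ 2) : ‖v‖ = |v i| :=
  le_antisymm ((pi_norm_le_iff_of_nonneg (abs_nonneg _)).mpr fun j => sq_le_sq.mp (h j))
    (norm_le_pi_norm v i)

lemma sq_le_pi_norm_sq [Fintype ι] (v : ι → ℝ) (j : ι) : v j ^ 2 ≤ ‖v‖ ^ 2 :=
  sq_le_sq.mpr ((abs_norm v).symm ▸ norm_le_pi_norm v j)

lemma sum_sq_le_card_mul_pi_norm_sq [Fintype ι] (v : ι → ℝ) :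
    ∑ j, v j ^ 2 ≤ Fintype.card ι * ‖v‖ ^ 2 := by
  simpa using sum_le_card_nsmul univ (fun j => v j ^ 2) _ fun j _ => sq_le_pi_norm_sq v j

lemma sum_sq_le_card_mul_inv_sq_mul_norm_mulVec_sq [Fintype ι] {σ : ℝ} (hσ : σ ≠ 0)
    (A : Matrix ι κ ℝ) (hσA : ∀ v : κ → ℝ, σ ^ 2 * ∑ j, v j ^ 2 ≤ ∑ i, (A *ᵥ v) i ^ 2)
    (v : κ → ℝ) :
    ∑ j, v j ^ 2 ≤ Fintype.card ι * (σ ^ 2)⁻¹ * ‖A *ᵥ v‖ ^ 2 := by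
  rw [mul_right_comm, mul_comm _ (σ ^ 2)⁻¹, le_inv_mul_iff₀ (by positivity)]
  exact (hσA v).trans (sum_sq_le_card_mul_pi_norm_sq _)

/-- The orthogonal projection of `y` onto `{z | (A *ᵥ z) i = b i}` when row `i` is a unit vector. -/
def rowProject (A : Matrix ι κ ℝ) (b : ι → ℝ) (i : ι) (y : κ → ℝ) : κ → ℝ :=
  y + (b i - (A *ᵥ y) i) • A i

lemma sum_sq_rowProject_sub (A : Matrix ι κ ℝ) (b : ι → ℝ) (i : ι)
    (hi : ∑ j, A i j ^ 2 = 1) (x y : κ → ℝ) :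
    ∑ j, (rowProject A b i y j - x j) ^ 2 =
      ∑ j, (y j - x j) ^ 2 - (A *ᵥ y - b) i ^ 2 + 2 * (A *ᵥ y - b) i * (A *ᵥ x - b) i := by
  set t := b i - (A *ᵥ y) i
  have hdot : ∑ j, A i j * (y j - x j) = (A *ᵥ y - b) i - (A *ᵥ x - b) i := by
    simp [mulVec, dotProduct, mul_sub, sum_sub_distrib]
  calc ∑ j, (rowProject A b i y j - x j) ^ 2
      = ∑ j, ((y j - x j) ^ 2 + 2 * t * (A i j * (y j - x j)) + t ^ 2 * A i j ^ 2) := by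
        refine sum_congr rfl fun j _ => ?_
        simp only [rowProject, Pi.add_apply, Pi.smul_apply, smul_eq_mul]
        ring
    _ = ∑ j, (y j - x j) ^ 2 + 2 * t * ∑ j, A i j * (y j - x j) + t ^ 2 * ∑ j, A i j ^ 2 := by
        rw [sum_add_distrib, sum_add_distrib, mul_sum, mul_sum]
    _ = _ := by
        rw [hdot, hi]
        simp only [t, Pi.sub_apply]
        ring

end

theorem motzkin_dichotomy_general
    {m n : ℕ} (A : Matrix (Fin m) (Fin n) ℝ)
    (hrows : ∀ i : Fin m, ∑ j, (A i j) ^ 2 = 1)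
    (σ : ℝ) (hσ : 0 < σ)
    (hσmin : ∀ v : Fin n → ℝ, σ ^ 2 * ∑ j, (v j) ^ 2 ≤ ∑ i, (A.mulVec v i) ^ 2)
    (b : Fin m → ℝ) (x xk xk1 : Fin n → ℝ) (e : Fin m → ℝ)
    (he : e = A.mulVec x - b)
    (i : Fin m)
    (hi : ∀ j : Fin m, (A.mulVec xk j - b j) ^ 2 ≤ (A.mulVec xk i - b i) ^ 2)
    (hupdate : xk1 = xk + (b i - A.mulVec xk i) • A i) :
    (∑ j, (xk1 j - x j) ^ 2 ≤
        ∑ j, (xk j - x j) ^ 2 - (1 / 2) * ‖A.mulVec xk - b‖ ^ 2) ∨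
    ((∑ j, (xk j - x j) ^ 2 ≤ 25 * m * (σ ^ 2)⁻¹ * ‖e‖ ^ 2) ∧
     (∑ j, (xk1 j - x j) ^ 2 ≤ (25 * m * (σ ^ 2)⁻¹ + 8) * ‖e‖ ^ 2)) := by
  set r := A.mulVec xk - b
  have hstep : ∑ j, (xk1 j - x j) ^ 2 = ∑ j, (xk j - x j) ^ 2 - r i ^ 2 + 2 * r i * e i := by
    rw [hupdate, he]
    exact sum_sq_rowProject_sub A b i (hrows i) x xk
  have hres : ‖r‖ = |r i| := pi_norm_eq_abs_of_forall_sq_le r i hi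
  have hei : |e i| ≤ ‖e‖ := norm_le_pi_norm e i
  by_cases hlarge : 4 * ‖e‖ ≤ |r i|
  · left
    rw [hstep, hres]
    have hcross : r i * e i ≤ |r i| * ‖e‖ :=
      (le_abs_self _).trans ((abs_mul _ _).trans_le (mul_le_mul_of_nonneg_left hei (abs_nonneg _)))
    nlinarith [sq_abs (r i), mul_le_mul_of_nonneg_left hlarge (abs_nonneg (r i))]
  · right
    have hsmall : ‖A *ᵥ (xk - x)‖ ≤ 5 * ‖e‖ := by
      have hdiff : A *ᵥ xk - A *ᵥ x = r - e := by
        rw [he]; exact (sub_sub_sub_cancel_right _ _ _).symm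
      rw [mulVec_sub, hdiff]
      linarith [norm_sub_le r e]
    have hii : ∑ j, (xk j - x j) ^ 2 ≤ 25 * m * (σ ^ 2)⁻¹ * ‖e‖ ^ 2 := by
      calc ∑ j, (xk j - x j) ^ 2 ≤ m * (σ ^ 2)⁻¹ * ‖A *ᵥ (xk - x)‖ ^ 2 := by
            simpa using sum_sq_le_card_mul_inv_sq_mul_norm_mulVec_sq hσ.ne' A hσmin (xk - x)
        _ ≤ m * (σ ^ 2)⁻¹ * (5 * ‖e‖) ^ 2 := by gcongr
        _ = 25 * m * (σ ^ 2)⁻¹ * ‖e‖ ^ 2 := by ring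
    refine ⟨hii, ?_⟩
    rw [hstep]
    nlinarith [sq_nonneg (r i - e i), sq_le_pi_norm_sq e i, sq_nonneg ‖e‖]

/-- **Corollary 1 (dichotomy).**
`A` is an `m × n` real matrix (`m ≥ n`) with full column rank `n` and rows of unit
Euclidean norm; `σ` denotes its smallest singular value, which is positive and
satisfies `σ ‖v‖ ≤ ‖A v‖` for all `v` (stated with squared Euclidean norms).
`b ∈ ℝ^m`, `x ∈ ℝ^n` is any fixed vector, `e = A x - b`, and `‖·‖` on `Fin m → ℝ`
is the sup (max) norm.  For any point `xk` with Motzkin iterate `xk1`, either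
(i) `‖xk1 - x‖² ≤ ‖xk - x‖² - (1/2) ‖A xk - b‖_∞²`, or both
(ii) `‖xk - x‖² ≤ 25 m σ⁻² ‖e‖_∞²` and
(iii) `‖xk1 - x‖² ≤ (25 m σ⁻² + 8) ‖e‖_∞²`. -/
theorem motzkin_dichotomy
    {m n : ℕ} (hmn : n ≤ m) (A : Matrix (Fin m) (Fin n) ℝ)
    (hrank : A.rank = n)
    (hrows : ∀ i : Fin m, ∑ j, (A i j) ^ 2 = 1)
    (σ : ℝ) (hσ : 0 < σ)
    (hσmin : ∀ v : Fin n → ℝ, σ ^ 2 * ∑ j, (v j) ^ 2 ≤ ∑ i, (A.mulVec v i) ^ 2)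
    (b : Fin m → ℝ) (x xk xk1 : Fin n → ℝ) (e : Fin m → ℝ)
    (he : e = A.mulVec x - b)
    (i : Fin m)
    (hi : ∀ j : Fin m, (A.mulVec xk j - b j) ^ 2 ≤ (A.mulVec xk i - b i) ^ 2)
    (hupdate : xk1 = xk + (b i - A.mulVec xk i) • A i) :
    (∑ j, (xk1 j - x j) ^ 2 ≤
        ∑ j, (xk j - x j) ^ 2 - (1 / 2) * ‖A.mulVec xk - b‖ ^ 2) ∨
    ((∑ j, (xk j - x j) ^ 2 ≤ 25 * m * (σ ^ 2)⁻¹ * ‖e‖ ^ 2) ∧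
     (∑ j, (xk1 j - x j) ^ 2 ≤ (25 * m * (σ ^ 2)⁻¹ + 8) * ‖e‖ ^ 2)) :=
  motzkin_dichotomy_general A hrows σ hσ hσmin b x xk xk1 e he i hi hupdate
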